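/- arXiv:1205.6096 — 6 statements merged into one kernel-verified Lean document; each statement's English description precedes it below -/
import Mathlib

section
/- Let V be a finite-dimensional vector space over a field of characteristic zero. Let b be a unimodular Lie bracket on V (i.e., tr(ad_b u) = 0 for all u), and let b′ be the modular bracket b′(u,v) = θ(u)Av − θ(v)Au where θ ∈ V*, A ∈ End(V), θ ∘ A = 0, and tr(A) ≠ 0. If b and b′ are compatible (b + b′ satisfies Jacobi), then θ(b(u,v)) = 0 for all u, v ∈ V. -/
/-!
The sum `c = b + b'` is a Lie bracket, and for any Lie bracket Jacobi says that `ad_c` of a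
bracket is a commutator, so the modular functional `u ↦ tr (ad_c u)` kills the derived algebra
of `c`. Since `b` is unimodular and `θ ∘ A = 0`, that functional is `tr A • θ`, and `θ` also kills
`b'`; hence `tr A * θ (b u v) = 0`.
-/

open LinearMap (trace comp_apply comp_add trace_comp_comm')

universe u v

variable {R : Type u} {M : Type v} [CommRing R] [AddCommGroup M] [Module R M]

structure IsLieBracket (c : M →ₗ[R] M →ₗ[R] M) : Prop where
  apply_self : ∀ x, c x x = 0
  jacobi : ∀ x y z, c (c x y) z + c (c y z) x + c (c z x) y = 0

noncomputable def modularFunctional (c : M →ₗ[R] M →ₗ[R] M) : Module.Dual R M :=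
  trace R M ∘ₗ c

def modularBracket (θ : Module.Dual R M) (A : M →ₗ[R] M) : M →ₗ[R] M →ₗ[R] M :=
  θ.smulRight A - (θ.smulRight A).flip

@[simp]
lemma modularBracket_apply (θ : Module.Dual R M) (A : M →ₗ[R] M) (u v : M) :
    modularBracket θ A u v = θ u • A v - θ v • A u :=
  rfl

lemma apply_modularBracket_eq_zero {θ : Module.Dual R M} {A : M →ₗ[R] M}
    (hθA : θ ∘ₗ A = 0) (u v : M) : θ (modularBracket θ A u v) = 0 := by
  have hθA' (w : M) : θ (A w) = 0 := LinearMap.congr_fun hθA w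
  simp [hθA']

namespace IsLieBracket

variable {c : M →ₗ[R] M →ₗ[R] M}

lemma apply_swap (hc : IsLieBracket c) (x y : M) : c y x = -c x y := by
  have h := hc.apply_self (x + y)
  simp only [map_add, LinearMap.add_apply, hc.apply_self, zero_add, add_zero] at h
  exact eq_neg_of_add_eq_zero_left h

lemma apply_apply (hc : IsLieBracket c) (x y : M) : c (c x y) = c x ∘ₗ c y - c y ∘ₗ c x := by
  ext z
  have h := hc.jacobi x y z
  rw [hc.apply_swap x (c y z), hc.apply_swap y (c z x), hc.apply_swap x z, map_neg] at h
  simp only [LinearMap.sub_apply, comp_apply]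
  linear_combination (norm := module) h

lemma modularFunctional_apply_apply [Module.Free R M] [Module.Finite R M]
    (hc : IsLieBracket c) (x y : M) : modularFunctional c (c x y) = 0 := by
  rw [modularFunctional, comp_apply, hc.apply_apply, map_sub, trace_comp_comm', sub_self]

end IsLieBracket

lemma modularFunctional_add (b c : M →ₗ[R] M →ₗ[R] M) :
    modularFunctional (b + c) = modularFunctional b + modularFunctional c :=
  comp_add _ _ _

lemma modularFunctional_modularBracket [Module.Free R M] [Module.Finite R M]
    (θ : Module.Dual R M) (A : M →ₗ[R] M) :
    modularFunctional (modularBracket θ A) = trace R M A • θ - θ ∘ₗ A := by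
  ext u
  have hu : modularBracket θ A u = θ u • A - θ.smulRight (A u) := by ext v; simp
  simp [modularFunctional, hu, mul_comm]

theorem stmt6_general {k V : Type*} [Field k] [AddCommGroup V] [Module k V]
    [FiniteDimensional k V]
    (b : V →ₗ[k] V →ₗ[k] V)
    (halt : ∀ x, b x x = 0)
    (huni : ∀ u, LinearMap.trace k V (b u) = 0)
    (θ : V →ₗ[k] k) (A : V →ₗ[k] V) (hθA : ∀ v, θ (A v) = 0)
    (htrA : LinearMap.trace k V A ≠ 0)
    (B : V →ₗ[k] V →ₗ[k] V) (hB : ∀ u v, B u v = θ u • A v - θ v • A u)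
    (hcompat : ∀ x y z, (b + B) ((b + B) x y) z + (b + B) ((b + B) y z) x +
        (b + B) ((b + B) z x) y = 0) :
    ∀ u v, θ (b u v) = 0 := by
  obtain rfl : B = modularBracket θ A := by ext u v; exact hB u v
  have hθA' : θ ∘ₗ A = 0 := LinearMap.ext hθA
  have hlie : IsLieBracket (b + modularBracket θ A) :=
    ⟨fun x => by simp [halt], hcompat⟩
  have hmod : modularFunctional (b + modularBracket θ A) = trace k V A • θ := by
    have hb : modularFunctional b = 0 := LinearMap.ext huni
    rw [modularFunctional_add, modularFunctional_modularBracket, hb, hθA', zero_add, sub_zero]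
  intro u v
  have h := hlie.modularFunctional_apply_apply u v
  rw [hmod, LinearMap.smul_apply, smul_eq_mul, LinearMap.add_apply, LinearMap.add_apply, map_add,
    apply_modularBracket_eq_zero hθA', add_zero] at h
  exact (mul_eq_zero.mp h).resolve_left htrA

/-- If a unimodular Lie bracket b is compatible with the modular bracket
B(u,v) = θ(u)Av − θ(v)Au with θ∘A = 0 and tr(A) ≠ 0, then θ vanishes on the
derived algebra of b. -/
theorem stmt6 {k V : Type*} [Field k] [CharZero k] [AddCommGroup V] [Module k V]
    [FiniteDimensional k V]
    (b : V →ₗ[k] V →ₗ[k] V)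
    (halt : ∀ x, b x x = 0)
    (hjac : ∀ x y z, b (b x y) z + b (b y z) x + b (b z x) y = 0)
    (huni : ∀ u, LinearMap.trace k V (b u) = 0)
    (θ : V →ₗ[k] k) (A : V →ₗ[k] V) (hθA : ∀ v, θ (A v) = 0)
    (htrA : LinearMap.trace k V A ≠ 0)
    (B : V →ₗ[k] V →ₗ[k] V) (hB : ∀ u v, B u v = θ u • A v - θ v • A u)
    (hcompat : ∀ x y z, (b + B) ((b + B) x y) z + (b + B) ((b + B) y z) x +
        (b + B) ((b + B) z x) y = 0) :
    ∀ u v, θ (b u v) = 0 :=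
  stmt6_general b halt huni θ A hθA htrA B hB hcompat
end

section
/- Let V be a finite-dimensional vector space over a field of characteristic zero and let b be a perfect Lie bracket on V, i.e., the span of {b(u,v) : u,v ∈ V} is all of V. Let θ ∈ V* be nonzero and A ∈ End(V) with θ ∘ A = 0 and tr(A) ≠ 0, and let b′(u,v) = θ(u)Av − θ(v)Au be the associated modular bracket. Then b and b′ are not compatible: b + b′ does not satisfy the Jacobi identity. -/
/-!
If `b + B` were a Lie bracket, the trace of its adjoint representation would vanish on brackets,
as for every Lie algebra. Perfectness of `b` makes `tr ad_b` vanish identically, while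
`tr ad_B w = θ w · tr A`; since `θ ∘ A = 0`, vanishing on the bracket `(b + B) x y` forces
`θ (b x y) · tr A = 0`. Hence `θ` kills all brackets of `b`, which span `M`, so `θ = 0`.
-/

open LinearMap

namespace LinearMap

variable {R M : Type*} [CommRing R] [AddCommGroup M] [Module R M]

lemma apply_apply_eq_comp_sub_comp (c : M →ₗ[R] M →ₗ[R] M) (halt : ∀ x, c x x = 0)
    (hjac : ∀ x y z, c (c x y) z + c (c y z) x + c (c z x) y = 0) (x y : M) :
    c (c x y) = c x ∘ₗ c y - c y ∘ₗ c x := by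
  have hanti : ∀ u v, c u v = -c v u := fun u v =>
    eq_neg_of_add_eq_zero_left (by simpa [halt] using halt (u + v))
  ext z
  have h := hjac x y z
  rw [hanti (c y z), hanti (c z x), hanti z x, map_neg, neg_neg] at h
  simp only [comp_apply, sub_apply]
  linear_combination (norm := abel) h

lemma trace_apply_apply_eq_zero [Module.Free R M] [Module.Finite R M]
    (c : M →ₗ[R] M →ₗ[R] M) (halt : ∀ x, c x x = 0)
    (hjac : ∀ x y z, c (c x y) z + c (c y z) x + c (c z x) y = 0) (x y : M) :
    trace R M (c (c x y)) = 0 := by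
  rw [apply_apply_eq_comp_sub_comp c halt hjac, map_sub, trace_comp_comm', sub_self]

lemma eq_zero_of_apply_apply_eq_zero {N : Type*} [AddCommGroup N] [Module R N]
    {c : M →ₗ[R] M →ₗ[R] M} (hperf : Submodule.span R {x : M | ∃ u v : M, c u v = x} = ⊤)
    {φ : M →ₗ[R] N} (hφ : ∀ u v, φ (c u v) = 0) : φ = 0 :=
  ext_on hperf (by rintro _ ⟨u, v, rfl⟩; exact hφ u v)

lemma trace_modularBracket_apply [Module.Free R M] [Module.Finite R M] (θ : M →ₗ[R] R)
    (A : M →ₗ[R] M) {B : M →ₗ[R] M →ₗ[R] M} (hB : ∀ u v, B u v = θ u • A v - θ v • A u) (w : M) :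
    trace R M (B w) = θ w * trace R M A - θ (A w) := by
  have hBw : B w = θ w • A - θ.smulRight (A w) := by
    ext v
    simp [hB]
  simp [hBw]

end LinearMap

theorem stmt7_general {k V : Type*} [Field k] [AddCommGroup V] [Module k V]
    [FiniteDimensional k V]
    (b : V →ₗ[k] V →ₗ[k] V)
    (halt : ∀ x, b x x = 0)
    (hjac : ∀ x y z, b (b x y) z + b (b y z) x + b (b z x) y = 0)
    (hperf : Submodule.span k {x : V | ∃ u v : V, b u v = x} = ⊤)
    (θ : V →ₗ[k] k) (hθ : θ ≠ 0)
    (A : V →ₗ[k] V) (hθA : ∀ v, θ (A v) = 0)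
    (htrA : LinearMap.trace k V A ≠ 0)
    (B : V →ₗ[k] V →ₗ[k] V) (hB : ∀ u v, B u v = θ u • A v - θ v • A u) :
    ¬ (∀ x y z, (b + B) ((b + B) x y) z + (b + B) ((b + B) y z) x +
        (b + B) ((b + B) z x) y = 0) := by
  intro hjacC
  have haltC : ∀ x, (b + B) x x = 0 := fun x => by simp [halt, hB]
  have htr_b : trace k V ∘ₗ b = 0 :=
    eq_zero_of_apply_apply_eq_zero hperf (trace_apply_apply_eq_zero b halt hjac)
  have htr_C : ∀ w, trace k V ((b + B) w) = θ w * trace k V A := fun w => by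
    rw [LinearMap.add_apply, map_add, ← comp_apply (trace k V) b, htr_b,
      trace_modularBracket_apply θ A hB, hθA, LinearMap.zero_apply, zero_add, sub_zero]
  refine hθ (eq_zero_of_apply_apply_eq_zero hperf fun x y => ?_)
  have hθC : θ ((b + B) x y) = θ (b x y) := by simp [hB, hθA]
  have htrC := trace_apply_apply_eq_zero (b + B) haltC hjacC x y
  rw [htr_C, hθC] at htrC
  exact (mul_eq_zero.mp htrC).resolve_right htrA

/-- A perfect Lie bracket is incompatible with any nonzero modular bracket
B(u,v) = θ(u)Av − θ(v)Au with θ ≠ 0, θ∘A = 0 and tr(A) ≠ 0. -/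
theorem stmt7 {k V : Type*} [Field k] [CharZero k] [AddCommGroup V] [Module k V]
    [FiniteDimensional k V]
    (b : V →ₗ[k] V →ₗ[k] V)
    (halt : ∀ x, b x x = 0)
    (hjac : ∀ x y z, b (b x y) z + b (b y z) x + b (b z x) y = 0)
    (hperf : Submodule.span k {x : V | ∃ u v : V, b u v = x} = ⊤)
    (θ : V →ₗ[k] k) (hθ : θ ≠ 0)
    (A : V →ₗ[k] V) (hθA : ∀ v, θ (A v) = 0)
    (htrA : LinearMap.trace k V A ≠ 0)
    (B : V →ₗ[k] V →ₗ[k] V) (hB : ∀ u v, B u v = θ u • A v - θ v • A u) :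
    ¬ (∀ x y z, (b + B) ((b + B) x y) z + (b + B) ((b + B) y z) x +
        (b + B) ((b + B) z x) y = 0) :=
  stmt7_general b halt hjac hperf θ hθ A hθA htrA B hB
end

section
/- Let g be a Lie algebra whose underlying space decomposes as V = S ⊕ W with [S,S] ⊆ S, [S,W] ⊆ W, and [W,W] ⊆ S (a d-pair). Define brackets b₁ and b₂ on V by: b₁ agrees with the bracket of g on S×S, S×W and W×S, and vanishes on W×W; b₂ agrees with the bracket of g on W×W and vanishes on S×S, S×W, W×S. Then b₁ and b₂ are both Lie brackets, they are compatible, and b₁ + b₂ is the bracket of g. -/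
/-!
Split the bracket of `g = S ⊕ W` by bidegree into `bS : S × S → S`, `act : S × W → W` and
`β : W × W → S`. On homogeneous triples, the components of the Jacobi identity of `g` say that
`bS` is a Lie bracket and that `act` is a representation of `(S, bS)` on `W`: these are exactly
the Lie axioms of the semidirect sum `b₁`. The dressing bracket `b₂` takes values in `S` and
kills `S`, so it is two-step nilpotent, and it is alternating because `g` is. Finally
`b₁ + b₂` is the bracket of `g`, whose Jacobi identity is the compatibility of `b₁` and `b₂`.
-/

def IsJacobi {M : Type*} [Add M] [Zero M] (b : M → M → M) : Prop :=
  ∀ p q r, b (b p q) r + b (b q r) p + b (b r p) q = 0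

section StrippingLemma

variable {R S W : Type*} [CommRing R] [AddCommGroup S] [Module R S]
  [AddCommGroup W] [Module R W]
  (bS : S →ₗ[R] S →ₗ[R] S) (act : S →ₗ[R] W →ₗ[R] W) (β : W →ₗ[R] W →ₗ[R] S)

def gradedBracket (p q : S × W) : S × W :=
  (bS p.1 q.1 + β p.2 q.2, act p.1 q.2 - act q.1 p.2)

def semidirectBracket (p q : S × W) : S × W :=
  (bS p.1 q.1, act p.1 q.2 - act q.1 p.2)

def dressingBracket (p q : S × W) : S × W :=
  (β p.2 q.2, 0)

theorem semidirectBracket_add_dressingBracket :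
    semidirectBracket bS act + dressingBracket β = gradedBracket bS act β := by
  funext p q
  simp [semidirectBracket, dressingBracket, gradedBracket]

variable {bS act β}

theorem bS_self_of_gradedBracket_self (h : ∀ p, gradedBracket bS act β p p = 0) (x : S) :
    bS x x = 0 := by
  simpa [gradedBracket] using congrArg Prod.fst (h (x, 0))

theorem β_self_of_gradedBracket_self (h : ∀ p, gradedBracket bS act β p p = 0) (w : W) :
    β w w = 0 := by
  simpa [gradedBracket] using congrArg Prod.fst (h (0, w))

theorem isJacobi_bS_of_isJacobi_gradedBracket (h : IsJacobi (gradedBracket bS act β)) :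
    IsJacobi fun x y => bS x y := fun x y z => by
  simpa [gradedBracket] using congrArg Prod.fst (h (x, 0) (y, 0) (z, 0))

theorem act_bS_of_isJacobi_gradedBracket (h : IsJacobi (gradedBracket bS act β))
    (x y : S) (w : W) : act (bS x y) w = act x (act y w) - act y (act x w) := by
  have hW := congrArg Prod.snd (h (x, 0) (y, 0) (0, w))
  simp only [gradedBracket, map_zero, LinearMap.zero_apply, sub_zero, zero_sub, map_neg,
    Prod.snd_add, Prod.snd_zero, add_zero] at hW
  rw [← sub_eq_zero, ← hW]
  abel

theorem semidirectBracket_self (hbS : ∀ x, bS x x = 0) (p : S × W) :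
    semidirectBracket bS act p p = 0 := by
  simp [semidirectBracket, hbS]

theorem isJacobi_semidirectBracket (hbS : IsJacobi fun x y => bS x y)
    (hact : ∀ x y w, act (bS x y) w = act x (act y w) - act y (act x w)) :
    IsJacobi (semidirectBracket bS act) := fun p q r => by
  refine Prod.ext (hbS p.1 q.1 r.1) ?_
  simp only [semidirectBracket, Prod.snd_add, Prod.snd_zero, map_sub, hact]
  abel

theorem dressingBracket_self (hβ : ∀ w, β w w = 0) (p : S × W) :
    dressingBracket β p p = 0 := by
  simp [dressingBracket, hβ]

theorem isJacobi_dressingBracket : IsJacobi (dressingBracket β) := fun p q r => by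
  simp [dressingBracket]

end StrippingLemma

/-- The Stripping Lemma: if g = S ⊕ W with [S,S]⊆S, [S,W]⊆W, [W,W]⊆S, then
the semidirect bracket b₁ and the dressing bracket b₂ are Lie brackets,
compatible, and b₁ + b₂ equals the bracket of g. -/
theorem stmt11 {R S W : Type*} [CommRing R] [AddCommGroup S] [Module R S]
    [AddCommGroup W] [Module R W]
    (bS : S →ₗ[R] S →ₗ[R] S) (act : S →ₗ[R] W →ₗ[R] W) (β : W →ₗ[R] W →ₗ[R] S)
    (B : S × W → S × W → S × W)
    (hB : ∀ p q, B p q = (bS p.1 q.1 + β p.2 q.2, act p.1 q.2 - act q.1 p.2))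
    (haltB : ∀ p, B p p = 0)
    (hjacB : ∀ p q r, B (B p q) r + B (B q r) p + B (B r p) q = 0)
    (b₁ b₂ : S × W → S × W → S × W)
    (hb₁ : ∀ p q, b₁ p q = (bS p.1 q.1, act p.1 q.2 - act q.1 p.2))
    (hb₂ : ∀ p q, b₂ p q = (β p.2 q.2, 0)) :
    ((∀ p, b₁ p p = 0) ∧
      ∀ p q r, b₁ (b₁ p q) r + b₁ (b₁ q r) p + b₁ (b₁ r p) q = 0) ∧
    ((∀ p, b₂ p p = 0) ∧
      ∀ p q r, b₂ (b₂ p q) r + b₂ (b₂ q r) p + b₂ (b₂ r p) q = 0) ∧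
    (∀ p q r, (b₁ (b₁ p q + b₂ p q) r + b₂ (b₁ p q + b₂ p q) r) +
        (b₁ (b₁ q r + b₂ q r) p + b₂ (b₁ q r + b₂ q r) p) +
        (b₁ (b₁ r p + b₂ r p) q + b₂ (b₁ r p + b₂ r p) q) = 0) ∧
    (∀ p q, b₁ p q + b₂ p q = B p q) := by
  obtain rfl : B = gradedBracket bS act β := funext₂ hB
  obtain rfl : b₁ = semidirectBracket bS act := funext₂ hb₁
  obtain rfl : b₂ = dressingBracket β := funext₂ hb₂
  have hsum := semidirectBracket_add_dressingBracket bS act β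
  refine ⟨⟨semidirectBracket_self (bS_self_of_gradedBracket_self haltB),
      isJacobi_semidirectBracket (isJacobi_bS_of_isJacobi_gradedBracket hjacB)
        (act_bS_of_isJacobi_gradedBracket hjacB)⟩,
    ⟨dressingBracket_self (β_self_of_gradedBracket_self haltB), isJacobi_dressingBracket⟩,
    ?_, fun p q => congrFun₂ hsum p q⟩
  change IsJacobi (semidirectBracket bS act + dressingBracket β)
  rwa [hsum]
end

section
/- Let g be a Lie algebra with a d-pair decomposition g = S ⊕ W ([S,S]⊆S, [S,W]⊆W, [W,W]⊆S), let ρ : g → End(V) be an irreducible representation on a finite-dimensional vector space V over a field k, and let A ∈ End(V) be nonzero with ρ(s)A = Aρ(s) for all s ∈ S and ρ(w)A = −Aρ(w) for all w ∈ W. If A has an eigenvalue λ ∈ k, then λ ≠ 0 and V = ker(A² − λ²·id). -/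
attribute [local instance 100] LieRing.ofAssociativeRing

/-!
`ρ s` commutes and `ρ w` anticommutes with `A`; both therefore preserve `ker A` and commute with
`A²`, and since `S + W = g`, the subspaces `ker A` and `ker (A² - λ²)` are `ρ`-invariant. By
irreducibility, `λ = 0` would force `ker A = V`, i.e. `A = 0`; and `ker (A² - λ²)` contains the
eigenvector of `A`, hence is all of `V`.
-/

open Module End Set LinearMap

lemma commute_mul_self_of_mul_eq_neg {R : Type*} [Ring R] {f a : R} (h : f * a = -(a * f)) :
    Commute f (a * a) := by
  rw [Commute, SemiconjBy, ← mul_assoc, h, neg_mul, mul_assoc, h, mul_neg, neg_neg, mul_assoc]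

section Invariance

variable {R M : Type*} [CommRing R] [AddCommGroup M] [Module R M]

lemma mapsTo_ker_of_commute {f a : End R M} (h : Commute f a) : MapsTo f (ker a) (ker a) :=
  fun u hu => by
    rw [SetLike.mem_coe, mem_ker] at hu ⊢
    rw [← End.mul_apply, ← h.eq, End.mul_apply, hu, map_zero]

lemma mapsTo_ker_of_mul_eq_neg {f a : End R M} (h : f * a = -(a * f)) :
    MapsTo f (ker a) (ker a) := fun u hu => by
  rw [SetLike.mem_coe, mem_ker] at hu ⊢
  simpa [hu] using congr($h u).symm

lemma mapsTo_of_sup_eq_top {L : Type*} [AddCommGroup L] [Module R L] {S W : Submodule R L}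
    (hSW : S ⊔ W = ⊤) (ρ : L →ₗ[R] End R M) {U : Submodule R M}
    (hS : ∀ s ∈ S, MapsTo (ρ s) U U) (hW : ∀ w ∈ W, MapsTo (ρ w) U U) (x : L) :
    MapsTo (ρ x) U U :=
  (sup_le (a := S) (b := W) (c := (Submodule.compatibleMaps U U).comap ρ) hS hW)
    (hSW ▸ Submodule.mem_top)

lemma eq_top_of_mapsTo_of_irreducible {ι : Type*} {T : ι → End R M}
    (hirr : ∀ U : Submodule R M, (∀ i, ∀ v ∈ U, T i v ∈ U) → U = ⊥ ∨ U = ⊤)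
    {U : Submodule R M} (hU : ∀ i, MapsTo (T i) U U) {v : M} (hvU : v ∈ U) (hv : v ≠ 0) :
    U = ⊤ :=
  (hirr U hU).resolve_left ((Submodule.ne_bot_iff U).mpr ⟨v, hvU, hv⟩)

end Invariance

theorem stmt14_general {k L V : Type*} [Field k] [LieRing L] [LieAlgebra k L]
    [AddCommGroup V] [Module k V]
    (S : LieSubalgebra k L) (W : Submodule k L)
    (hcompl : IsCompl S.toSubmodule W)
    (ρ : L →ₗ⁅k⁆ Module.End k V)
    (hirr : ∀ U : Submodule k V, (∀ x : L, ∀ v ∈ U, ρ x v ∈ U) → U = ⊥ ∨ U = ⊤)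
    (A : Module.End k V) (hA : A ≠ 0)
    (hcomm : ∀ s ∈ S, ρ s * A = A * ρ s)
    (hanti : ∀ w ∈ W, ρ w * A = -(A * ρ w))
    (c : k) (v : V) (hv : v ≠ 0) (hAv : A v = c • v) :
    c ≠ 0 ∧ ∀ u : V, (A * A) u = (c * c) • u := by
  have hinv {U : Submodule k V} (hS : ∀ s ∈ S, MapsTo (ρ s) U U)
      (hW : ∀ w ∈ W, MapsTo (ρ w) U U) (x : L) : MapsTo (ρ x) U U :=
    mapsTo_of_sup_eq_top hcompl.sup_eq_top (ρ : L →ₗ[k] End k V) hS hW x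
  have hcomm' (s : L) (hs : s ∈ S) : Commute (ρ s) A := hcomm s hs
  have hc : c ≠ 0 := by
    rintro rfl
    have hker : ker A = ⊤ := eq_top_of_mapsTo_of_irreducible hirr
      (hinv (fun s hs => mapsTo_ker_of_commute (hcomm' s hs))
        (fun w hw => mapsTo_ker_of_mul_eq_neg (hanti w hw)))
      (by simp [hAv]) hv
    exact hA (ker_eq_top.mp hker)
  have heig : eigenspace (A * A) (c * c) = ⊤ := eq_top_of_mapsTo_of_irreducible hirr
    (hinv
      (fun s hs => mapsTo_genEigenspace_of_comm ((hcomm' s hs).mul_right (hcomm' s hs)).symm _ _)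
      (fun w hw =>
        mapsTo_genEigenspace_of_comm (commute_mul_self_of_mul_eq_neg (hanti w hw)).symm _ _))
    (mem_eigenspace_iff.mpr (by simp [End.mul_apply, hAv, smul_smul])) hv
  exact ⟨hc, fun u => mem_eigenspace_iff.mp (heig ▸ Submodule.mem_top)⟩

/-- For an irreducible representation ρ of a Lie algebra with a d-pair (S,W)
and a nonzero splitting operator A, any eigenvalue λ ∈ k of A is nonzero and
V = ker(A² − λ²·id). -/
theorem stmt14 {k L V : Type*} [Field k] [LieRing L] [LieAlgebra k L]
    [AddCommGroup V] [Module k V] [FiniteDimensional k V]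
    (S : LieSubalgebra k L) (W : Submodule k L)
    (hcompl : IsCompl S.toSubmodule W)
    (hSW : ∀ s ∈ S, ∀ w ∈ W, ⁅s, w⁆ ∈ W)
    (hWW : ∀ w ∈ W, ∀ w' ∈ W, ⁅w, w'⁆ ∈ S)
    (ρ : L →ₗ⁅k⁆ Module.End k V)
    (hirr : ∀ U : Submodule k V, (∀ x : L, ∀ v ∈ U, ρ x v ∈ U) → U = ⊥ ∨ U = ⊤)
    (A : Module.End k V) (hA : A ≠ 0)
    (hcomm : ∀ s ∈ S, ρ s * A = A * ρ s)
    (hanti : ∀ w ∈ W, ρ w * A = -(A * ρ w))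
    (c : k) (v : V) (hv : v ≠ 0) (hAv : A v = c • v) :
    c ≠ 0 ∧ ∀ u : V, (A * A) u = (c * c) • u :=
  stmt14_general S W hcompl ρ hirr A hA hcomm hanti c v hv hAv
end

section
/- Let g be a simplest Lie algebra (a simple Lie algebra all of whose proper subalgebras are abelian) over a field, and let x ∈ g be nonzero. Then the centralizer C_x = {y ∈ g : [x,y] = 0} is an abelian subalgebra, and it is self-normalizing: if y ∈ g satisfies [x,y] ∈ C_x, then y ∈ C_x. Consequently C_x is a Cartan subalgebra of g. -/
/-!
The centralizer `C` of `x ≠ 0` is a proper subalgebra (it would otherwise put `x` in the trivial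
center), so it is abelian. Its normalizer is proper as well: if it were everything, `C` would be
a nonzero proper ideal. Hence the normalizer is abelian too, and since it contains `x`, all of it
commutes with `x`, i.e. it equals `C`. Finally `⁅x, y⁆ ∈ C` puts `y` in the normalizer of `C`,
because `C` is abelian.
-/

namespace LieSubalgebra

variable {R L : Type*} [CommRing R] [LieRing L] [LieAlgebra R L]

variable (R) in
def centralizer (x : L) : LieSubalgebra R L where
  carrier := {y | ⁅x, y⁆ = 0}
  add_mem' ha hb := by simp_all
  zero_mem' := lie_zero x
  smul_mem' c a ha := by simp_all
  lie_mem' ha hb := by simp_all [leibniz_lie]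

@[simp]
lemma mem_centralizer {x y : L} : y ∈ centralizer R x ↔ ⁅x, y⁆ = 0 := Iff.rfl

lemma self_mem_centralizer (x : L) : x ∈ centralizer R x := lie_self x

lemma centralizer_ne_top [LieModule.IsFaithful R L L] {x : L} (hx : x ≠ 0) :
    centralizer R x ≠ ⊤ := by
  intro h
  have hx_center : x ∈ LieAlgebra.center R L := by
    rw [LieModule.mem_maxTrivSubmodule]
    intro y
    rw [← lie_skew, mem_centralizer.mp (h ▸ mem_top y), neg_zero]
  rw [LieAlgebra.center_eq_bot] at hx_center
  exact hx hx_center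

lemma normalizer_ne_top_of_isSimple [LieAlgebra.IsSimple R L] {H : LieSubalgebra R L}
    (h_bot : H ≠ ⊥) (h_top : H ≠ ⊤) : H.normalizer ≠ ⊤ := by
  intro h
  obtain ⟨I, hI⟩ := (exists_lieIdeal_coe_eq_iff R H).mpr fun x _ hy ↦
    ideal_in_normalizer (h ▸ mem_top x) hy
  rcases LieAlgebra.IsSimple.eq_bot_or_eq_top I with rfl | rfl
  · refine h_bot (_root_.eq_bot_iff.mpr fun y hy ↦ ?_)
    rw [← hI] at hy
    exact hy
  · exact h_top (by rw [← hI, LieIdeal.top_toLieSubalgebra])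

lemma mem_normalizer_centralizer_of_lie_mem {x y : L}
    (hC : ∀ a ∈ centralizer R x, ∀ b ∈ centralizer R x, ⁅a, b⁆ = 0)
    (hy : ⁅x, y⁆ ∈ centralizer R x) : y ∈ (centralizer R x).normalizer := by
  rw [mem_normalizer_iff]
  intro b hb
  rw [mem_centralizer, leibniz_lie, hC _ hy _ hb, mem_centralizer.mp hb, lie_zero, add_zero]

section ProperSubalgebrasAbelian

variable [LieAlgebra.IsSimple R L]

lemma lie_eq_zero_of_mem_centralizer
    (hL : ∀ K : LieSubalgebra R L, K ≠ ⊤ → ∀ x ∈ K, ∀ y ∈ K, ⁅x, y⁆ = 0) {x : L} (hx : x ≠ 0) :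
    ∀ a ∈ centralizer R x, ∀ b ∈ centralizer R x, ⁅a, b⁆ = 0 :=
  hL _ (centralizer_ne_top hx)

lemma normalizer_centralizer_eq
    (hL : ∀ K : LieSubalgebra R L, K ≠ ⊤ → ∀ x ∈ K, ∀ y ∈ K, ⁅x, y⁆ = 0) {x : L} (hx : x ≠ 0) :
    (centralizer R x).normalizer = centralizer R x := by
  have h_bot : centralizer R x ≠ ⊥ := fun h ↦ hx <| by
    simpa [h] using self_mem_centralizer (R := R) x
  have h_top := normalizer_ne_top_of_isSimple h_bot (centralizer_ne_top hx)
  refine le_antisymm (fun y hy ↦ ?_) (le_normalizer _)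
  exact hL _ h_top x (le_normalizer _ (self_mem_centralizer x)) y hy

end ProperSubalgebrasAbelian

end LieSubalgebra

open LieSubalgebra in
/-- In a simplest Lie algebra (a simple Lie algebra all of whose proper
subalgebras are abelian) the centralizer of a nonzero element is abelian and
self-normalizing, hence a Cartan subalgebra. -/
theorem stmt15 {k L : Type*} [Field k] [LieRing L] [LieAlgebra k L]
    (hsimple : LieAlgebra.IsSimple k L)
    (hsimplest : ∀ K : LieSubalgebra k L, K ≠ ⊤ → ∀ x ∈ K, ∀ y ∈ K, ⁅x, y⁆ = 0)
    (x : L) (hx : x ≠ 0) :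
    (∀ y z : L, ⁅x, y⁆ = 0 → ⁅x, z⁆ = 0 → ⁅y, z⁆ = 0) ∧
    (∀ y : L, ⁅x, ⁅x, y⁆⁆ = 0 → ⁅x, y⁆ = 0) := by
  have := hsimple
  have hC := lie_eq_zero_of_mem_centralizer hsimplest hx
  refine ⟨fun y z hy hz ↦ hC y hy z hz, fun y hy ↦ ?_⟩
  have hy_normalizer := mem_normalizer_centralizer_of_lie_mem hC hy
  rwa [normalizer_centralizer_eq hsimplest hx] at hy_normalizer
end

section
/- Let g be a simplest Lie algebra (a simple Lie algebra all of whose proper subalgebras are abelian). Then: (1) if x, z ∈ g, y ∈ g with y ≠ 0, [x,y] = 0 and [z,y] = 0, then [x,z] = 0; and (2) for any nonzero x, y ∈ g, either C_x = C_y or C_x ∩ C_y = {0}, where C_x denotes the centralizer of x. -/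
/-! If every proper subalgebra of a centerless Lie algebra is abelian, then the centralizer of a
nonzero element, being a proper subalgebra, is abelian: two elements commuting with a common
nonzero element commute with each other. Two centralizers sharing a nonzero element `w` are then
both contained in the centralizer of `w`, and hence in each other. -/

namespace LieAlgebra

variable (R : Type*) {L : Type*} [CommRing R] [LieRing L] [LieAlgebra R L]

def centralizerOf (y : L) : LieSubalgebra R L where
  carrier := {x | ⁅x, y⁆ = 0}
  add_mem' {a b} ha hb := by simp_all [add_lie]
  zero_mem' := zero_lie y
  smul_mem' c a ha := by simp_all [smul_lie]
  lie_mem' {a b} ha hb := by simp_all [lie_lie]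

variable {R}

@[simp]
theorem mem_centralizerOf {x y : L} : x ∈ centralizerOf R y ↔ ⁅x, y⁆ = 0 := Iff.rfl

theorem centralizerOf_eq_top_iff {y : L} : centralizerOf R y = ⊤ ↔ y ∈ center R L := by
  rw [eq_top_iff, SetLike.le_def, LieModule.mem_maxTrivSubmodule]
  simp only [LieSubalgebra.mem_top, true_implies, mem_centralizerOf]

theorem lie_eq_zero_of_lie_eq_zero_of_lie_eq_zero (hcenter : center R L = ⊥)
    (habelian : ∀ K : LieSubalgebra R L, K ≠ ⊤ → ∀ x ∈ K, ∀ y ∈ K, ⁅x, y⁆ = 0)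
    {x z y : L} (hy : y ≠ 0) (hxy : ⁅x, y⁆ = 0) (hzy : ⁅z, y⁆ = 0) : ⁅x, z⁆ = 0 := by
  have hproper : centralizerOf R y ≠ ⊤ := by
    rwa [Ne, centralizerOf_eq_top_iff, hcenter, LieSubmodule.mem_bot]
  exact habelian _ hproper x hxy z hzy

end LieAlgebra

section CommutingTransitive

variable {L : Type*} [LieRing L]

theorem lie_eq_zero_of_lie_eq_zero_of_common_commuting
    (htrans : ∀ x z y : L, y ≠ 0 → ⁅x, y⁆ = 0 → ⁅z, y⁆ = 0 → ⁅x, z⁆ = 0)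
    {x y w z : L} (hx : x ≠ 0) (hw : w ≠ 0) (hxw : ⁅x, w⁆ = 0) (hyw : ⁅y, w⁆ = 0)
    (hxz : ⁅x, z⁆ = 0) : ⁅y, z⁆ = 0 := by
  have hzx : ⁅z, x⁆ = 0 := by rw [← lie_skew, hxz, neg_zero]
  have hwx : ⁅w, x⁆ = 0 := by rw [← lie_skew, hxw, neg_zero]
  exact htrans y z w hw hyw (htrans z w x hx hzx hwx)

theorem centralizers_eq_or_inter_eq_bot
    (htrans : ∀ x z y : L, y ≠ 0 → ⁅x, y⁆ = 0 → ⁅z, y⁆ = 0 → ⁅x, z⁆ = 0)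
    {x y : L} (hx : x ≠ 0) (hy : y ≠ 0) :
    (∀ z : L, ⁅x, z⁆ = 0 ↔ ⁅y, z⁆ = 0) ∨ (∀ z : L, ⁅x, z⁆ = 0 → ⁅y, z⁆ = 0 → z = 0) := by
  by_cases h : ∃ w : L, w ≠ 0 ∧ ⁅x, w⁆ = 0 ∧ ⁅y, w⁆ = 0
  · obtain ⟨w, hw, hxw, hyw⟩ := h
    exact .inl fun z =>
      ⟨lie_eq_zero_of_lie_eq_zero_of_common_commuting htrans hx hw hxw hyw,
        lie_eq_zero_of_lie_eq_zero_of_common_commuting htrans hy hw hyw hxw⟩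
  · exact .inr fun z hxz hyz => by_contra fun hz => h ⟨z, hz, hxz, hyz⟩

end CommutingTransitive

/-- In a simplest Lie algebra: commuting with a common nonzero element is
transitive, and centralizers of nonzero elements either coincide or intersect
trivially. -/
theorem stmt16 {k L : Type*} [Field k] [LieRing L] [LieAlgebra k L]
    (hsimple : LieAlgebra.IsSimple k L)
    (hsimplest : ∀ K : LieSubalgebra k L, K ≠ ⊤ → ∀ x ∈ K, ∀ y ∈ K, ⁅x, y⁆ = 0) :
    (∀ x z y : L, y ≠ 0 → ⁅x, y⁆ = 0 → ⁅z, y⁆ = 0 → ⁅x, z⁆ = 0) ∧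
    (∀ x y : L, x ≠ 0 → y ≠ 0 →
      (∀ z : L, ⁅x, z⁆ = 0 ↔ ⁅y, z⁆ = 0) ∨
      (∀ z : L, ⁅x, z⁆ = 0 → ⁅y, z⁆ = 0 → z = 0)) := by
  have htrans : ∀ x z y : L, y ≠ 0 → ⁅x, y⁆ = 0 → ⁅z, y⁆ = 0 → ⁅x, z⁆ = 0 := fun _ _ _ =>
    LieAlgebra.lie_eq_zero_of_lie_eq_zero_of_lie_eq_zero (LieAlgebra.center_eq_bot k L) hsimplest
  exact ⟨htrans, fun _ _ => centralizers_eq_or_inter_eq_bot htrans⟩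
end
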